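/- Fix 0 < α < β and let ξ : ℕ₊ → ℂ satisfy |ξ(n)| ≤ C·n^(−1/2−β) for all n, where C = sup_n |ξ(n)| n^(1/2+β) < ∞. Define η(n) = −n^(−1/2−α) ∑_{m=n+1}^∞ m^(−1/2+α) (1 − (n/m)^(2α)) ξ(m). Then: (1) |η(n)| ≤ (C/(β−α))·n^(−1/2−β) for all n ≥ 1; and (2) the pointwise tridiagonal action of J_α on η satisfies (J_α η)(n) = ξ(n) for all n ≥ 2 and (J_α η)(1) = ξ(1) − ∑_{m=1}^∞ ξ(m) m^(−1/2+α). -/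

import Mathlib

open scoped BigOperators

/-- Off-diagonal Jacobi parameter `a_α`. -/
noncomputable def aJ (α x : ℝ) : ℝ :=
  (x ^ (α + 1/2) * (x + 1) ^ (α + 1/2)) / (x ^ (2 * α) - (x + 1) ^ (2 * α))

/-- Diagonal Jacobi parameter `b_α`. -/
noncomputable def bJ (α x : ℝ) : ℝ :=
  (x ^ (2 * α + 1) * ((x + 1) ^ (2 * α) - (x - 1) ^ (2 * α))) /
    (((x + 1) ^ (2 * α) - x ^ (2 * α)) * (x ^ (2 * α) - (x - 1) ^ (2 * α)))

/-!
The sequences `p(n) = n^(-1/2-α)` and `q(n) = n^(-1/2+α)` solve `(J_α u)(n) = 0` for `n ≥ 2`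
and have discrete Wronskian `a_α(n) (p(n) q(n+1) - q(n) p(n+1)) = -1`: writing `u = x^(α+1/2)`
and `w = x^(2α)`, the Jacobi parameters are `a_α(x) = u(x) u(x+1) / (w(x) - w(x+1))` and
`b_α(x) = u(x)² (w(x+1) - w(x-1)) / ((w(x+1) - w(x)) (w(x) - w(x-1)))`, and `p = 1/u`, `q = w/u`.
Splitting the kernel, `η(n) = -p(n) ∑_{m>n} q(m) ξ(m) + q(n) ∑_{m>n} p(m) ξ(m)` is the
variation-of-constants solution of `J_α η = ξ`; at `n = 1` the missing neighbour gives
`(J_α p)(1) = 1`, `(J_α q)(1) = 0`, whence the boundary term `∑ ξ(m) q(m)`.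
For the estimate, `|1 - (n/m)^(2α)| ≤ 1` and `∑_{m>n} m^(-1-δ) ≤ n^(-δ)/δ` by comparison with
`∫_n^∞ x^(-1-δ) dx`.
-/

section ThreeTerm

variable {K : Type*} [Field K] {u₀ u₁ u₂ w₀ w₁ w₂ : K}

theorem three_term_inv (hu₀ : u₀ ≠ 0) (hu₂ : u₂ ≠ 0) (h₀₁ : w₀ ≠ w₁) (h₁₂ : w₁ ≠ w₂) :
    u₀ * u₁ / (w₀ - w₁) * u₀⁻¹ + u₁ ^ 2 * (w₂ - w₀) / ((w₂ - w₁) * (w₁ - w₀)) * u₁⁻¹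
      + u₁ * u₂ / (w₁ - w₂) * u₂⁻¹ = 0 := by
  field_simp [sub_ne_zero.2 h₀₁, sub_ne_zero.2 h₀₁.symm, sub_ne_zero.2 h₁₂, sub_ne_zero.2 h₁₂.symm]
  ring

theorem three_term_div (hu₀ : u₀ ≠ 0) (hu₂ : u₂ ≠ 0) (h₀₁ : w₀ ≠ w₁) (h₁₂ : w₁ ≠ w₂) :
    u₀ * u₁ / (w₀ - w₁) * (w₀ / u₀) + u₁ ^ 2 * (w₂ - w₀) / ((w₂ - w₁) * (w₁ - w₀)) * (w₁ / u₁)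
      + u₁ * u₂ / (w₁ - w₂) * (w₂ / u₂) = 0 := by
  field_simp [sub_ne_zero.2 h₀₁, sub_ne_zero.2 h₀₁.symm, sub_ne_zero.2 h₁₂, sub_ne_zero.2 h₁₂.symm]
  ring

theorem three_term_wronskian_eq_neg_one (hu₁ : u₁ ≠ 0) (hu₂ : u₂ ≠ 0) (h₁₂ : w₁ ≠ w₂) :
    u₁ * u₂ / (w₁ - w₂) * (u₁⁻¹ * (w₂ / u₂) - w₁ / u₁ * u₂⁻¹) = -1 := by
  field_simp [sub_ne_zero.2 h₁₂]
  ring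

end ThreeTerm

section JacobiParameters

variable {α x : ℝ}

theorem rpow_neg_half_sub_eq_inv (hx : 0 < x) : x ^ (-(1/2 : ℝ) - α) = (x ^ (α + 1/2))⁻¹ := by
  rw [← Real.rpow_neg hx.le]; ring_nf

theorem rpow_neg_half_add_eq_div (hx : 0 < x) :
    x ^ (-(1/2 : ℝ) + α) = x ^ (2 * α) / x ^ (α + 1/2) := by
  rw [← Real.rpow_sub hx]; ring_nf

theorem bJ_eq (hx : 0 ≤ x) :
    bJ α x = (x ^ (α + 1/2)) ^ 2 * ((x + 1) ^ (2 * α) - (x - 1) ^ (2 * α)) /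
    (((x + 1) ^ (2 * α) - x ^ (2 * α)) * (x ^ (2 * α) - (x - 1) ^ (2 * α))) := by
  rw [bJ, ← Real.rpow_mul_natCast hx]; push_cast; ring_nf

theorem rpow_two_mul_lt_add_one (hα : 0 < α) (hx : 0 ≤ x) : x ^ (2 * α) < (x + 1) ^ (2 * α) :=
  Real.rpow_lt_rpow hx (lt_add_one x) (by positivity)

theorem jacobi_rpow_neg_half_sub_eq_zero (hα : 0 < α) (hx : 1 < x) :
    aJ α (x - 1) * (x - 1) ^ (-(1/2 : ℝ) - α) + bJ α x * x ^ (-(1/2 : ℝ) - α)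
      + aJ α x * (x + 1) ^ (-(1/2 : ℝ) - α) = 0 := by
  have h₀ := rpow_two_mul_lt_add_one hα (by linarith : 0 ≤ x - 1)
  rw [sub_add_cancel] at h₀
  rw [bJ_eq (by linarith), aJ, aJ, sub_add_cancel, rpow_neg_half_sub_eq_inv (by linarith),
    rpow_neg_half_sub_eq_inv (by linarith), rpow_neg_half_sub_eq_inv (by linarith)]
  exact three_term_inv (Real.rpow_pos_of_pos (by linarith) _).ne' (by positivity) h₀.ne
    (rpow_two_mul_lt_add_one hα (by linarith)).ne

theorem jacobi_rpow_neg_half_add_eq_zero (hα : 0 < α) (hx : 1 < x) :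
    aJ α (x - 1) * (x - 1) ^ (-(1/2 : ℝ) + α) + bJ α x * x ^ (-(1/2 : ℝ) + α)
      + aJ α x * (x + 1) ^ (-(1/2 : ℝ) + α) = 0 := by
  have h₀ := rpow_two_mul_lt_add_one hα (by linarith : 0 ≤ x - 1)
  rw [sub_add_cancel] at h₀
  rw [bJ_eq (by linarith), aJ, aJ, sub_add_cancel, rpow_neg_half_add_eq_div (by linarith),
    rpow_neg_half_add_eq_div (by linarith), rpow_neg_half_add_eq_div (by linarith)]
  exact three_term_div (Real.rpow_pos_of_pos (by linarith) _).ne' (by positivity) h₀.ne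
    (rpow_two_mul_lt_add_one hα (by linarith)).ne

theorem jacobi_one_rpow_neg_half_sub_eq_one (hα : 0 < α) :
    bJ α 1 + aJ α 1 * 2 ^ (-(1/2 : ℝ) - α) = 1 := by
  have h : (1 : ℝ) < 2 ^ (2 * α) := Real.one_lt_rpow one_lt_two (by positivity)
  rw [bJ, aJ, rpow_neg_half_sub_eq_inv two_pos]
  norm_num [Real.zero_rpow (by positivity : 2 * α ≠ 0)]
  field_simp [sub_ne_zero.2 h.ne, sub_ne_zero.2 h.ne']
  ring

theorem jacobi_one_rpow_neg_half_add_eq_zero (hα : 0 < α) :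
    bJ α 1 + aJ α 1 * 2 ^ (-(1/2 : ℝ) + α) = 0 := by
  have h : (1 : ℝ) < 2 ^ (2 * α) := Real.one_lt_rpow one_lt_two (by positivity)
  rw [bJ, aJ, rpow_neg_half_add_eq_div two_pos]
  norm_num [Real.zero_rpow (by positivity : 2 * α ≠ 0)]
  field_simp [sub_ne_zero.2 h.ne, sub_ne_zero.2 h.ne']
  ring

theorem aJ_mul_wronskian_eq_neg_one (hα : 0 < α) (hx : 0 < x) :
    aJ α x * (x ^ (-(1/2 : ℝ) - α) * (x + 1) ^ (-(1/2 : ℝ) + α)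
      - x ^ (-(1/2 : ℝ) + α) * (x + 1) ^ (-(1/2 : ℝ) - α)) = -1 := by
  rw [aJ, rpow_neg_half_sub_eq_inv hx, rpow_neg_half_sub_eq_inv (by linarith),
    rpow_neg_half_add_eq_div hx, rpow_neg_half_add_eq_div (by linarith)]
  exact three_term_wronskian_eq_neg_one (by positivity) (by positivity)
    (rpow_two_mul_lt_add_one hα hx.le).ne

end JacobiParameters

section PNatTail

variable {E : Type*} [NormedAddCommGroup E] {f : ℕ+ → E}

noncomputable def pnatTail (f : ℕ+ → E) (n : ℕ+) : E := ∑' m, if n < m then f m else 0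

theorem Summable.pnat_ite_lt [CompleteSpace E] (hf : Summable f) (n : ℕ+) :
    Summable fun m => if n < m then f m else 0 :=
  hf.summable_of_eq_zero_or_self fun m => by split_ifs <;> simp

theorem pnatTail_eq_add_pnatTail_succ [CompleteSpace E] (hf : Summable f) (n : ℕ+) :
    pnatTail f n = f (n + 1) + pnatTail f (n + 1) := by
  rw [pnatTail, (hf.pnat_ite_lt n).tsum_eq_add_tsum_ite (n + 1), if_pos (PNat.lt_add_right n 1)]
  congr 1
  refine tsum_congr fun m => ?_
  rcases eq_or_ne m (n + 1) with rfl | hm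
  · simp
  · simp only [if_neg hm, ← PNat.add_one_le_iff, hm.symm.le_iff_lt]

theorem tsum_eq_add_pnatTail_one (hf : Summable f) : ∑' m, f m = f 1 + pnatTail f 1 := by
  rw [hf.tsum_eq_add_tsum_ite 1, pnatTail]
  congr 1
  refine tsum_congr fun m => ?_
  rcases eq_or_ne m 1 with rfl | hm
  · simp
  · simp only [if_neg hm, if_pos (lt_of_le_of_ne one_le (Ne.symm hm))]

end PNatTail

section TailBound

open Finset

theorem sum_Ico_rpow_le {δ : ℝ} (hδ : 0 < δ) {n : ℕ} (hn : 0 < n) (N : ℕ) :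
    ∑ i ∈ Ico n N, ((i + 1 : ℕ) : ℝ) ^ (-1 - δ) ≤ (n : ℝ) ^ (-δ) / δ := by
  have hn' : (0 : ℝ) < n := by exact_mod_cast hn
  rcases le_total n N with hnN | hNn
  · have hanti : AntitoneOn (fun x : ℝ => x ^ (-1 - δ)) (Set.Icc n N) := fun x hx y _ hxy =>
      Real.rpow_le_rpow_of_nonpos (hn'.trans_le hx.1) hxy (by linarith)
    have h0 : (0 : ℝ) ∉ Set.uIcc (n : ℝ) N := by
      rw [Set.uIcc_of_le (by exact_mod_cast hnN)]
      exact fun h => hn'.not_ge h.1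
    calc ∑ i ∈ Ico n N, ((i + 1 : ℕ) : ℝ) ^ (-1 - δ) ≤ ∫ x in (n : ℝ)..N, x ^ (-1 - δ) :=
          hanti.sum_le_integral_Ico hnN
      _ = ((n : ℝ) ^ (-δ) - (N : ℝ) ^ (-δ)) / δ := by
          rw [integral_rpow (Or.inr ⟨by linarith, h0⟩), show -1 - δ + 1 = -δ by ring, div_neg,
            ← neg_div, neg_sub]
      _ ≤ (n : ℝ) ^ (-δ) / δ := by
          gcongr
          exact sub_le_self _ (by positivity)
  · rw [Ico_eq_empty_of_le hNn, sum_empty]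
    positivity

theorem summable_pnat_rpow {r : ℝ} (hr : r < -1) : Summable fun m : ℕ+ => (m : ℝ) ^ r :=
  summable_pnat_iff_summable_nat.2 (Real.summable_nat_rpow.2 hr)

theorem pnatTail_rpow_le {δ : ℝ} (hδ : 0 < δ) (n : ℕ+) :
    pnatTail (fun m : ℕ+ => (m : ℝ) ^ (-1 - δ)) n ≤ (n : ℝ) ^ (-δ) / δ := by
  have h := tsum_pnat_eq_tsum_succ (f := fun k : ℕ => if (n : ℕ) < k then (k : ℝ) ^ (-1 - δ) else 0)
  simp only [PNat.coe_lt_coe] at h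
  rw [pnatTail, h]
  refine Real.tsum_le_of_sum_range_le (fun k => by positivity) fun N => ?_
  calc _ = ∑ i ∈ Ico (n : ℕ) N, ((i + 1 : ℕ) : ℝ) ^ (-1 - δ) := by
        rw [← sum_filter]
        congr 1
        ext k
        simp only [mem_filter, mem_range, mem_Ico]
        omega
    _ ≤ _ := sum_Ico_rpow_le hδ n.pos N

end TailBound

section Volterra

variable {α β C : ℝ} {ξ : ℕ+ → ℂ}

theorem norm_le_mul_rpow_of_mul_rpow_le (hC : ∀ n : ℕ+, ‖ξ n‖ * (n : ℝ) ^ ((1/2 : ℝ) + β) ≤ C)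
    (n : ℕ+) : ‖ξ n‖ ≤ C * (n : ℝ) ^ (-(1/2 : ℝ) - β) := by
  have hn : (0 : ℝ) < n := by exact_mod_cast n.pos
  calc ‖ξ n‖ = ‖ξ n‖ * (n : ℝ) ^ ((1/2 : ℝ) + β) * (n : ℝ) ^ (-(1/2 : ℝ) - β) := by
        rw [mul_assoc, ← Real.rpow_add hn]; norm_num
    _ ≤ C * (n : ℝ) ^ (-(1/2 : ℝ) - β) := by gcongr; exact hC n

theorem norm_rpow_mul_le (hξ : ∀ n : ℕ+, ‖ξ n‖ ≤ C * (n : ℝ) ^ (-(1/2 : ℝ) - β)) (s : ℝ) (m : ℕ+) :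
    ‖(((m : ℝ) ^ s : ℝ) : ℂ) * ξ m‖ ≤ C * (m : ℝ) ^ (s - 1/2 - β) := by
  have hm : (0 : ℝ) < m := by exact_mod_cast m.pos
  rw [norm_mul, Complex.norm_real, Real.norm_of_nonneg (by positivity)]
  calc (m : ℝ) ^ s * ‖ξ m‖ ≤ (m : ℝ) ^ s * (C * (m : ℝ) ^ (-(1/2 : ℝ) - β)) := by gcongr; exact hξ m
    _ = C * (m : ℝ) ^ (s - 1/2 - β) := by rw [mul_left_comm, ← Real.rpow_add hm]; ring_nf

theorem summable_rpow_mul (hξ : ∀ n : ℕ+, ‖ξ n‖ ≤ C * (n : ℝ) ^ (-(1/2 : ℝ) - β)) {s : ℝ}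
    (hs : s < β - 1/2) : Summable fun m : ℕ+ => (((m : ℝ) ^ s : ℝ) : ℂ) * ξ m :=
  .of_norm_bounded ((summable_pnat_rpow (by linarith)).mul_left C) (norm_rpow_mul_le hξ s)

local notation "𝔭" n:max => ((((n : ℕ+) : ℝ) ^ (-(1/2 : ℝ) - α) : ℝ) : ℂ)
local notation "𝔮" n:max => ((((n : ℕ+) : ℝ) ^ (-(1/2 : ℝ) + α) : ℝ) : ℂ)

theorem volterra_kernel_eq_sub (n m : ℕ+) :
    𝔮 m * (1 - ((((n : ℝ) / m) ^ (2 * α) : ℝ) : ℂ))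
      = 𝔮 m - (((n : ℝ) ^ (2 * α) : ℝ) : ℂ) * 𝔭 m := by
  have hn : (0 : ℝ) < n := by exact_mod_cast n.pos
  have hm : (0 : ℝ) < m := by exact_mod_cast m.pos
  have h : (m : ℝ) ^ (-(1/2 : ℝ) + α) * ((n : ℝ) / m) ^ (2 * α)
      = (n : ℝ) ^ (2 * α) * (m : ℝ) ^ (-(1/2 : ℝ) - α) := by
    rw [Real.div_rpow hn.le hm.le, mul_div_left_comm, ← Real.rpow_sub hm]; ring_nf
  rw [mul_sub, mul_one, ← Complex.ofReal_mul, h, Complex.ofReal_mul]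

theorem neg_rpow_mul_volterra_eq (hp : Summable fun m => 𝔭 m * ξ m)
    (hq : Summable fun m => 𝔮 m * ξ m) (n : ℕ+) :
    -𝔭 n * (∑' m : ℕ+, if n < m then 𝔮 m * (1 - ((((n : ℝ) / m) ^ (2 * α) : ℝ) : ℂ)) * ξ m
      else 0) = -𝔭 n * pnatTail (fun m => 𝔮 m * ξ m) n + 𝔮 n * pnatTail (fun m => 𝔭 m * ξ m) n := by
  have hpq : 𝔭 n * (((n : ℝ) ^ (2 * α) : ℝ) : ℂ) = 𝔮 n := by
    have hn : (0 : ℝ) < n := by exact_mod_cast n.pos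
    rw [← Complex.ofReal_mul, ← Real.rpow_add hn]; ring_nf
  have hsplit : (∑' m : ℕ+, if n < m then 𝔮 m * (1 - ((((n : ℝ) / m) ^ (2 * α) : ℝ) : ℂ)) * ξ m
      else 0) = pnatTail (fun m => 𝔮 m * ξ m) n
        - (((n : ℝ) ^ (2 * α) : ℝ) : ℂ) * pnatTail (fun m => 𝔭 m * ξ m) n := by
    rw [pnatTail, pnatTail, ← tsum_mul_left, ← (hq.pnat_ite_lt n).tsum_sub
      ((hp.pnat_ite_lt n).mul_left _)]
    refine tsum_congr fun m => ?_
    split_ifs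
    · rw [volterra_kernel_eq_sub]; ring
    · simp
  rw [hsplit]
  linear_combination pnatTail (fun m => 𝔭 m * ξ m) n * hpq

theorem norm_one_sub_ofReal_le_one {r : ℝ} (h₀ : 0 ≤ r) (h₁ : r ≤ 1) : ‖(1 : ℂ) - r‖ ≤ 1 := by
  rw [← Complex.ofReal_one, ← Complex.ofReal_sub, Complex.norm_real, Real.norm_eq_abs, abs_le]
  constructor <;> linarith

theorem norm_volterra_term_le (hα : 0 ≤ α) (hξ : ∀ n : ℕ+, ‖ξ n‖ ≤ C * (n : ℝ) ^ (-(1/2 : ℝ) - β))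
    {n m : ℕ+} (hnm : n < m) :
    ‖𝔮 m * (1 - ((((n : ℝ) / m) ^ (2 * α) : ℝ) : ℂ)) * ξ m‖ ≤ C * (m : ℝ) ^ (-1 - (β - α)) := by
  have hratio : (n : ℝ) / m ≤ 1 := div_le_one_of_le₀ (by exact_mod_cast hnm.le) (by positivity)
  have hkernel := norm_one_sub_ofReal_le_one (Real.rpow_nonneg (by positivity) (2 * α))
    (Real.rpow_le_one (by positivity) hratio (by positivity))
  calc ‖𝔮 m * (1 - ((((n : ℝ) / m) ^ (2 * α) : ℝ) : ℂ)) * ξ m‖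
      = ‖𝔮 m * ξ m‖ * ‖(1 : ℂ) - ((((n : ℝ) / m) ^ (2 * α) : ℝ) : ℂ)‖ := by
        rw [mul_right_comm, norm_mul]
    _ ≤ C * (m : ℝ) ^ (-(1/2 : ℝ) + α - 1/2 - β) * 1 :=
        mul_le_mul (norm_rpow_mul_le hξ _ m) hkernel (norm_nonneg _)
          ((norm_nonneg _).trans (norm_rpow_mul_le hξ _ m))
    _ = C * (m : ℝ) ^ (-1 - (β - α)) := by ring_nf

theorem norm_neg_rpow_mul_volterra_le (hα : 0 ≤ α) (hβ : α < β)
    (hξ : ∀ n : ℕ+, ‖ξ n‖ ≤ C * (n : ℝ) ^ (-(1/2 : ℝ) - β)) (n : ℕ+) :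
    ‖-𝔭 n * (∑' m : ℕ+, if n < m then 𝔮 m * (1 - ((((n : ℝ) / m) ^ (2 * α) : ℝ) : ℂ)) * ξ m
      else 0)‖ ≤ C / (β - α) * (n : ℝ) ^ (-(1/2 : ℝ) - β) := by
  have hn : (0 : ℝ) < n := by exact_mod_cast n.pos
  have hδ : 0 < β - α := sub_pos.2 hβ
  have hC : 0 ≤ C := by simpa using (norm_nonneg _).trans (hξ 1)
  have hmajorant : HasSum (fun m : ℕ+ => if n < m then C * (m : ℝ) ^ (-1 - (β - α)) else 0)
      (C * pnatTail (fun m : ℕ+ => (m : ℝ) ^ (-1 - (β - α))) n) := by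
    rw [pnatTail, ← tsum_mul_left]
    simp only [mul_ite, mul_zero]
    exact (((summable_pnat_rpow (by linarith)).mul_left C).pnat_ite_lt n).hasSum
  calc _ = (n : ℝ) ^ (-(1/2 : ℝ) - α) * ‖∑' m : ℕ+, if n < m then
        𝔮 m * (1 - ((((n : ℝ) / m) ^ (2 * α) : ℝ) : ℂ)) * ξ m else 0‖ := by
        rw [norm_mul, norm_neg, Complex.norm_real, Real.norm_of_nonneg (by positivity)]
    _ ≤ (n : ℝ) ^ (-(1/2 : ℝ) - α) * (C * ((n : ℝ) ^ (-(β - α)) / (β - α))) := by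
        gcongr
        refine (tsum_of_norm_bounded hmajorant fun m => ?_).trans ?_
        · split_ifs with hnm
          · exact norm_volterra_term_le hα hξ hnm
          · simp
        · gcongr
          exact pnatTail_rpow_le hδ n
    _ = C / (β - α) * ((n : ℝ) ^ (-(1/2 : ℝ) - α) * (n : ℝ) ^ (-(β - α))) := by ring
    _ = C / (β - α) * (n : ℝ) ^ (-(1/2 : ℝ) - β) := by rw [← Real.rpow_add hn]; ring_nf

theorem jacobi_apply_eq_of_variation_of_constants (hα : 0 < α)
    (hp : Summable fun m => 𝔭 m * ξ m) (hq : Summable fun m => 𝔮 m * ξ m) {η : ℕ+ → ℂ}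
    (hη : ∀ n, η n = -𝔭 n * pnatTail (fun m => 𝔮 m * ξ m) n
      + 𝔮 n * pnatTail (fun m => 𝔭 m * ξ m) n)
    {n : ℕ+} (hn : 2 ≤ n) :
    (aJ α ((n : ℝ) - 1) : ℂ) * η (n - 1) + (bJ α n : ℂ) * η n + (aJ α n : ℂ) * η (n + 1) = ξ n := by
  have h1n : 1 < n := lt_of_lt_of_le (by decide) hn
  have hpred : n - 1 + 1 = n := PNat.sub_add_of_lt h1n
  have hx : (1 : ℝ) < n := by exact_mod_cast h1n
  have hcast₀ : ((n - 1 : ℕ+) : ℝ) = n - 1 := by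
    have := congrArg (fun k : ℕ+ => (k : ℝ)) hpred
    push_cast at this
    linarith
  have hcast₂ : ((n + 1 : ℕ+) : ℝ) = n + 1 := by push_cast [PNat.add_coe]; rfl
  have hqξ₀ := pnatTail_eq_add_pnatTail_succ hq (n - 1)
  have hpξ₀ := pnatTail_eq_add_pnatTail_succ hp (n - 1)
  have hqξ₁ := eq_sub_of_add_eq' (pnatTail_eq_add_pnatTail_succ hq n).symm
  have hpξ₁ := eq_sub_of_add_eq' (pnatTail_eq_add_pnatTail_succ hp n).symm
  rw [hpred] at hqξ₀ hpξ₀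
  have hsol_p := congrArg Complex.ofReal (jacobi_rpow_neg_half_sub_eq_zero hα hx)
  have hsol_q := congrArg Complex.ofReal (jacobi_rpow_neg_half_add_eq_zero hα hx)
  have hwr := congrArg Complex.ofReal
    (aJ_mul_wronskian_eq_neg_one hα (by linarith : (0 : ℝ) < n - 1))
  rw [sub_add_cancel] at hwr
  push_cast at hsol_p hsol_q hwr
  rw [hη, hη, hη, hqξ₀, hpξ₀, hqξ₁, hpξ₁, hcast₀, hcast₂]
  linear_combination (-pnatTail (fun m => 𝔮 m * ξ m) n) * hsol_p
    + pnatTail (fun m => 𝔭 m * ξ m) n * hsol_q - ξ n * hwr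

theorem jacobi_apply_one_eq_of_variation_of_constants (hα : 0 < α)
    (hp : Summable fun m => 𝔭 m * ξ m) (hq : Summable fun m => 𝔮 m * ξ m) {η : ℕ+ → ℂ}
    (hη : ∀ n, η n = -𝔭 n * pnatTail (fun m => 𝔮 m * ξ m) n
      + 𝔮 n * pnatTail (fun m => 𝔭 m * ξ m) n) :
    (bJ α 1 : ℂ) * η 1 + (aJ α 1 : ℂ) * η 2 = ξ 1 - ∑' m : ℕ+, ξ m * 𝔮 m := by
  have hqξ := eq_sub_of_add_eq' (pnatTail_eq_add_pnatTail_succ hq 1).symm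
  have hpξ := eq_sub_of_add_eq' (pnatTail_eq_add_pnatTail_succ hp 1).symm
  have hsum : ∑' m : ℕ+, ξ m * 𝔮 m = 𝔮 1 * ξ 1 + pnatTail (fun m => 𝔮 m * ξ m) 1 := by
    simp_rw [mul_comm (ξ _)]
    exact tsum_eq_add_pnatTail_one hq
  have hsol_p := congrArg Complex.ofReal (jacobi_one_rpow_neg_half_sub_eq_one hα)
  have hsol_q := congrArg Complex.ofReal (jacobi_one_rpow_neg_half_add_eq_zero hα)
  push_cast at hsol_p hsol_q
  rw [hsum, hη, hη, show (2 : ℕ+) = 1 + 1 from rfl, hqξ, hpξ]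
  norm_num at hsol_p hsol_q ⊢
  linear_combination (-pnatTail (fun m => 𝔮 m * ξ m) 1) * hsol_p
    + pnatTail (fun m => 𝔭 m * ξ m) 1 * hsol_q

end Volterra

/-- The auxiliary Volterra-type operator: if `|ξ(n)| ≤ C n^(-1/2-β)` with `0 < α < β`, then
`η(n) = -n^(-1/2-α) ∑_{m>n} m^(-1/2+α)(1-(n/m)^(2α)) ξ(m)` satisfies
`|η(n)| ≤ (C/(β-α)) n^(-1/2-β)`, `(J_α η)(n) = ξ(n)` for `n ≥ 2`, and
`(J_α η)(1) = ξ(1) - ∑_m ξ(m) m^(-1/2+α)`. -/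
theorem volterra_operator_estimate (α β : ℝ) (hα : 0 < α) (hβ : α < β)
    (ξ : ℕ+ → ℂ) (C : ℝ) (hC : ∀ n : ℕ+, ‖ξ n‖ * (n : ℝ) ^ ((1/2 : ℝ) + β) ≤ C)
    (η : ℕ+ → ℂ)
    (hη : ∀ n : ℕ+, η n = -(((n : ℝ) ^ (-(1/2 : ℝ) - α) : ℝ) : ℂ) *
      ∑' m : ℕ+, if n < m then
        (((m : ℝ) ^ (-(1/2 : ℝ) + α) : ℝ) : ℂ)
          * (1 - ((((n : ℝ) / (m : ℝ)) ^ (2 * α) : ℝ) : ℂ)) * ξ m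
      else 0) :
    (∀ n : ℕ+, ‖η n‖ ≤ (C / (β - α)) * (n : ℝ) ^ (-(1/2 : ℝ) - β)) ∧
    (∀ n : ℕ+, 2 ≤ n →
      (aJ α ((n : ℝ) - 1) : ℂ) * η (n - 1) + (bJ α (n : ℝ) : ℂ) * η n
        + (aJ α (n : ℝ) : ℂ) * η (n + 1) = ξ n) ∧
    (bJ α 1 : ℂ) * η 1 + (aJ α 1 : ℂ) * η 2
      = ξ 1 - ∑' m : ℕ+, ξ m * (((m : ℝ) ^ (-(1/2 : ℝ) + α) : ℝ) : ℂ) := by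
  have hξ := norm_le_mul_rpow_of_mul_rpow_le hC
  have hp := summable_rpow_mul hξ (s := -(1/2 : ℝ) - α) (by linarith)
  have hq := summable_rpow_mul hξ (s := -(1/2 : ℝ) + α) (by linarith)
  have hrepr n := (hη n).trans (neg_rpow_mul_volterra_eq hp hq n)
  refine ⟨fun n => ?_, fun n hn => jacobi_apply_eq_of_variation_of_constants hα hp hq hrepr hn,
    jacobi_apply_one_eq_of_variation_of_constants hα hp hq hrepr⟩
  rw [hη n]
  exact norm_neg_rpow_mul_volterra_le hα.le hβ hξ n
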